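/- arXiv:2603.29190 — 7 statements merged into one kernel-verified Lean document; each statement's English description precedes it below -/
import Mathlib

section
/- Let λ ∈ (0,1), let n be a positive integer, and let (a_i)_{i=1}^n and (b_i)_{i=1}^n be sequences of positive real numbers forming a λ-quasi-hyperbolic pair, i.e. ∏_{j=1}^{k} a_j ≤ λ^k for every k = 1,…,n, ∏_{j=k}^{n} b_j ≥ λ^{k−n−1} for every k = 1,…,n, and a_k ≤ λ²·b_k for every k = 1,…,n. Then there exists a well-adapted sequence for (a_i,b_i): a sequence (c_i)_{i=1}^n of positive real numbers such that ∏_{j=1}^{k} c_j ≤ 1 for k = 1,…,n−1, ∏_{j=1}^{n} c_j = 1, and for every i = 1,…,n one has a_i/c_i ≤ λ and b_i/c_i ≥ λ^{-1}. -/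
/-- Lemma 3.1 (Gan): every λ-quasi-hyperbolic pair of positive sequences has a
well-adapted balance sequence. -/
theorem quasi_hyperbolic_has_well_adapted_sequence
    (lam : ℝ) (hlam : lam ∈ Set.Ioo (0 : ℝ) 1) (n : ℕ) (hn : 0 < n)
    (a b : ℕ → ℝ)
    (ha : ∀ i ∈ Finset.Icc 1 n, 0 < a i)
    (hb : ∀ i ∈ Finset.Icc 1 n, 0 < b i)
    (h1 : ∀ k ∈ Finset.Icc 1 n, (∏ j ∈ Finset.Icc 1 k, a j) ≤ lam ^ k)
    (h2 : ∀ k ∈ Finset.Icc 1 n, lam ^ ((k : ℤ) - n - 1) ≤ ∏ j ∈ Finset.Icc k n, b j)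
    (h3 : ∀ k ∈ Finset.Icc 1 n, a k ≤ lam ^ 2 * b k) :
    ∃ c : ℕ → ℝ, (∀ i ∈ Finset.Icc 1 n, 0 < c i) ∧
      (∀ k ∈ Finset.Icc 1 (n - 1), (∏ j ∈ Finset.Icc 1 k, c j) ≤ 1) ∧
      (∏ j ∈ Finset.Icc 1 n, c j) = 1 ∧
      (∀ i ∈ Finset.Icc 1 n, a i / c i ≤ lam ∧ lam⁻¹ ≤ b i / c i) := by
  obtain ⟨hl0, hl1⟩ := hlam
  have hlne : lam ≠ 0 := ne_of_gt hl0
  set A : ℕ → ℝ := fun k => (∏ j ∈ Finset.Icc 1 k, a j) / lam ^ k with hAdef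
  set C : ℕ → ℝ := fun k =>
    lam ^ ((k : ℤ) - (n : ℤ)) / ∏ j ∈ Finset.Icc (k + 1) n, b j with hCdef
  set E : ℕ → ℝ := fun k => max (A k) (C k) with hEdef
  have hproda : ∀ k, k ≤ n → 0 < ∏ j ∈ Finset.Icc 1 k, a j := by
    intro k hk
    refine Finset.prod_pos fun j hj => ha j ?_
    rw [Finset.mem_Icc] at hj ⊢
    exact ⟨hj.1, le_trans hj.2 hk⟩
  have hprodb : ∀ k, 0 < ∏ j ∈ Finset.Icc (k + 1) n, b j := by
    intro k
    refine Finset.prod_pos fun j hj => hb j ?_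
    rw [Finset.mem_Icc] at hj ⊢
    exact ⟨by omega, hj.2⟩
  have hApos : ∀ k, k ≤ n → 0 < A k := fun k hk =>
    div_pos (hproda k hk) (pow_pos hl0 k)
  have hCpos : ∀ k, 0 < C k := fun k => div_pos (zpow_pos hl0 _) (hprodb k)
  have hEpos : ∀ k, k ≤ n → 0 < E k := fun k hk => lt_max_of_lt_left (hApos k hk)
  have hAle : ∀ k, k ≤ n → A k ≤ 1 := by
    intro k hk
    rcases Nat.eq_zero_or_pos k with h0 | hpos
    · subst h0; simp [hAdef]
    · have := h1 k (Finset.mem_Icc.mpr ⟨hpos, hk⟩)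
      exact (div_le_one (pow_pos hl0 k)).mpr this
  have hCle : ∀ k, k ≤ n → C k ≤ 1 := by
    intro k hk
    rcases eq_or_lt_of_le hk with rfl | hlt
    · simp [hCdef, Finset.Icc_eq_empty (by omega : ¬ (k + 1 ≤ k))]
    · have h2' := h2 (k + 1) (Finset.mem_Icc.mpr ⟨by omega, hlt⟩)
      have hcast : ((k + 1 : ℕ) : ℤ) - n - 1 = (k : ℤ) - n := by push_cast; ring
      rw [hcast] at h2'
      exact (div_le_one (hprodb k)).mpr h2'
  have hE0 : E 0 = 1 := by
    have hA0 : A 0 = 1 := by simp [hAdef]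
    have := hCle 0 (by omega)
    simp only [hEdef]
    rw [hA0]
    exact max_eq_left this
  have hEn : E n = 1 := by
    have hCn : C n = 1 := by
      simp [hCdef, Finset.Icc_eq_empty (by omega : ¬ (n + 1 ≤ n))]
    simp only [hEdef]
    rw [hCn]
    exact max_eq_right (hAle n le_rfl)
  have hsplit : ∀ m, m + 1 ≤ n →
      ∏ j ∈ Finset.Icc (m + 1) n, b j = b (m + 1) * ∏ j ∈ Finset.Icc (m + 2) n, b j := by
    intro m hm
    rw [← Finset.Ico_add_one_right_eq_Icc, Finset.prod_eq_prod_Ico_succ_bot (by omega), Finset.Ico_add_one_right_eq_Icc]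
  have hAstep : ∀ m, m + 1 ≤ n → A (m + 1) = A m * (a (m + 1) / lam) := by
    intro m hm
    simp only [hAdef]
    rw [Finset.prod_Icc_succ_top (by omega : 1 ≤ m + 1), pow_succ]
    field_simp
  have hCstep : ∀ m, m + 1 ≤ n → C (m + 1) = C m * (lam * b (m + 1)) := by
    intro m hm
    have hbm : b (m + 1) ≠ 0 := ne_of_gt (hb (m + 1) (Finset.mem_Icc.mpr ⟨by omega, hm⟩))
    have hz : lam ^ (((m + 1 : ℕ) : ℤ) - n) = lam ^ ((m : ℤ) - n) * lam := by
      rw [← zpow_add_one₀ hlne]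
      congr 1
      push_cast; ring
    have hprodne : (∏ j ∈ Finset.Icc (m + 2) n, b j) ≠ 0 := ne_of_gt (hprodb (m + 1))
    simp only [hCdef]
    rw [hsplit m hm, hz]
    field_simp
  have htb : ∀ m, m + 1 ≤ n → a (m + 1) / lam ≤ lam * b (m + 1) := by
    intro m hm
    have h3' := h3 (m + 1) (Finset.mem_Icc.mpr ⟨by omega, hm⟩)
    rw [div_le_iff₀ hl0]
    nlinarith
  have hstep_low : ∀ m, m + 1 ≤ n → E m * (a (m + 1) / lam) ≤ E (m + 1) := by
    intro m hm
    have ham : 0 < a (m + 1) := ha (m + 1) (Finset.mem_Icc.mpr ⟨by omega, hm⟩)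
    have ht : 0 ≤ a (m + 1) / lam := le_of_lt (div_pos ham hl0)
    have hA' : A m * (a (m + 1) / lam) ≤ A (m + 1) := le_of_eq (hAstep m hm).symm
    have hC' : C m * (a (m + 1) / lam) ≤ C (m + 1) := by
      rw [hCstep m hm]
      exact mul_le_mul_of_nonneg_left (htb m hm) (le_of_lt (hCpos m))
    calc E m * (a (m + 1) / lam)
        = max (A m * (a (m + 1) / lam)) (C m * (a (m + 1) / lam)) := by
          rw [max_mul_of_nonneg _ _ ht]
      _ ≤ max (A (m + 1)) (C (m + 1)) := max_le_max hA' hC'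
  have hstep_high : ∀ m, m + 1 ≤ n → E (m + 1) ≤ E m * (lam * b (m + 1)) := by
    intro m hm
    have hbm : 0 < b (m + 1) := hb (m + 1) (Finset.mem_Icc.mpr ⟨by omega, hm⟩)
    have hlb : 0 ≤ lam * b (m + 1) := le_of_lt (mul_pos hl0 hbm)
    have hA' : A (m + 1) ≤ A m * (lam * b (m + 1)) := by
      rw [hAstep m hm]
      exact mul_le_mul_of_nonneg_left (htb m hm) (le_of_lt (hApos m (by omega)))
    have hC' : C (m + 1) ≤ C m * (lam * b (m + 1)) := le_of_eq (hCstep m hm)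
    calc E (m + 1) = max (A (m + 1)) (C (m + 1)) := rfl
      _ ≤ max (A m * (lam * b (m + 1))) (C m * (lam * b (m + 1))) := max_le_max hA' hC'
      _ = E m * (lam * b (m + 1)) := (max_mul_of_nonneg _ _ hlb).symm
  refine ⟨fun i => E i / E (i - 1), ?_, ?_, ?_, ?_⟩
  · intro i hi
    rw [Finset.mem_Icc] at hi
    exact div_pos (hEpos i hi.2) (hEpos (i - 1) (by omega))
  case _ =>
    -- first prove telescoping, shared via a local have inside each goal
    intro k hk
    rw [Finset.mem_Icc] at hk
    have htel : ∀ m, m ≤ n → (∏ j ∈ Finset.Icc 1 m, E j / E (j - 1)) = E m := by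
      intro m
      induction m with
      | zero => intro _; simp [hE0]
      | succ p ih =>
        intro hp
        rw [Finset.prod_Icc_succ_top (by omega : 1 ≤ p + 1), ih (by omega)]
        have hpsub : p + 1 - 1 = p := rfl
        rw [hpsub, mul_comm, div_mul_cancel₀ _ (ne_of_gt (hEpos p (by omega)))]
    rw [htel k (by omega)]
    exact max_le (hAle k (by omega)) (hCle k (by omega))
  case _ =>
    have htel : ∀ m, m ≤ n → (∏ j ∈ Finset.Icc 1 m, E j / E (j - 1)) = E m := by
      intro m
      induction m with
      | zero => intro _; simp [hE0]
      | succ p ih =>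
        intro hp
        rw [Finset.prod_Icc_succ_top (by omega : 1 ≤ p + 1), ih (by omega)]
        have hpsub : p + 1 - 1 = p := rfl
        rw [hpsub, mul_comm, div_mul_cancel₀ _ (ne_of_gt (hEpos p (by omega)))]
    rw [htel n le_rfl, hEn]
  · intro i hi
    rw [Finset.mem_Icc] at hi
    obtain ⟨hi1, hi2⟩ := hi
    obtain ⟨m, rfl⟩ : ∃ m, i = m + 1 := ⟨i - 1, by omega⟩
    have hEm : 0 < E m := hEpos m (by omega)
    have hEm1 : 0 < E (m + 1) := hEpos (m + 1) hi2
    have hc : (fun i => E i / E (i - 1)) (m + 1) = E (m + 1) / E m := rfl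
    have hcpos : 0 < E (m + 1) / E m := div_pos hEm1 hEm
    have hlow : a (m + 1) / lam ≤ E (m + 1) / E m := by
      rw [le_div_iff₀ hEm]
      calc a (m + 1) / lam * E m = E m * (a (m + 1) / lam) := by ring
        _ ≤ E (m + 1) := hstep_low m hi2
    have hhigh : E (m + 1) / E m ≤ lam * b (m + 1) := by
      rw [div_le_iff₀ hEm]
      calc E (m + 1) ≤ E m * (lam * b (m + 1)) := hstep_high m hi2
        _ = lam * b (m + 1) * E m := by ring
    have ham : 0 < a (m + 1) := ha (m + 1) (Finset.mem_Icc.mpr ⟨by omega, hi2⟩)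
    have hbm : 0 < b (m + 1) := hb (m + 1) (Finset.mem_Icc.mpr ⟨by omega, hi2⟩)
    constructor
    · rw [hc, div_le_iff₀ hcpos]
      calc a (m + 1) = lam * (a (m + 1) / lam) := by field_simp
        _ ≤ lam * (E (m + 1) / E m) := by
            exact mul_le_mul_of_nonneg_left hlow (le_of_lt hl0)
    · rw [hc, le_div_iff₀ hcpos]
      calc lam⁻¹ * (E (m + 1) / E m) ≤ lam⁻¹ * (lam * b (m + 1)) := by
            exact mul_le_mul_of_nonneg_left hhigh (le_of_lt (inv_pos.mpr hl0))
        _ = b (m + 1) := by field_simp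
end

section
/- Let E and F be finite-dimensional real normed vector spaces, let 0 < β < m, and let A : E → E, B : F → E, C : E → F, D : F → F be continuous linear maps with ‖A v‖ ≥ m·‖v‖ for all v ∈ E, ‖B‖ ≤ β, and ‖C‖ ≤ β. Then for every continuous linear map P : E → F with ‖P‖ ≤ 1, the map A + B ∘ P is a continuous linear isomorphism and the graph transform T(P) := (C + D ∘ P) ∘ (A + B ∘ P)^{-1} satisfies ‖T(P)‖ ≤ (‖D‖ + β)/(m − β). In particular, if (‖D‖ + β)/(m − β) ≤ 1 then T maps the closed unit ball of the space of continuous linear maps from E to F into itself. -/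
/-- The graph transform T(P) = (C + D ∘ P) ∘ (A + B ∘ P)⁻¹ is well defined for
‖P‖ ≤ 1 and satisfies ‖T(P)‖ ≤ (‖D‖ + β)/(m − β); in particular it maps the
closed unit ball into itself when (‖D‖ + β)/(m − β) ≤ 1. -/
theorem graph_transform_norm_bound
    {E F : Type*} [NormedAddCommGroup E] [NormedSpace ℝ E]
    [NormedAddCommGroup F] [NormedSpace ℝ F]
    [FiniteDimensional ℝ E] [FiniteDimensional ℝ F]
    (m β : ℝ) (hβ : 0 < β) (hβm : β < m)
    (A : E →L[ℝ] E) (B : F →L[ℝ] E) (C : E →L[ℝ] F) (D : F →L[ℝ] F)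
    (hA : ∀ v : E, m * ‖v‖ ≤ ‖A v‖) (hB : ‖B‖ ≤ β) (hC : ‖C‖ ≤ β) :
    ∀ P : E →L[ℝ] F, ‖P‖ ≤ 1 →
      ∃ S : E ≃L[ℝ] E, (S : E →L[ℝ] E) = A + B.comp P ∧
        ‖(C + D.comp P).comp (S.symm : E →L[ℝ] E)‖ ≤ (‖D‖ + β) / (m - β) ∧
        ((‖D‖ + β) / (m - β) ≤ 1 →
          ‖(C + D.comp P).comp (S.symm : E →L[ℝ] E)‖ ≤ 1) := by
  intro P hP
  set S₀ : E →L[ℝ] E := A + B.comp P with hS₀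
  have hmβ : (0:ℝ) < m - β := by linarith
  have hBP : ∀ v : E, ‖B (P v)‖ ≤ β * ‖v‖ := by
    intro v
    calc ‖B (P v)‖ ≤ ‖B‖ * ‖P v‖ := B.le_opNorm _
      _ ≤ β * ‖P v‖ := mul_le_mul_of_nonneg_right hB (norm_nonneg _)
      _ ≤ β * (‖P‖ * ‖v‖) := mul_le_mul_of_nonneg_left (P.le_opNorm v) hβ.le
      _ ≤ β * (1 * ‖v‖) := mul_le_mul_of_nonneg_left
            (mul_le_mul_of_nonneg_right hP (norm_nonneg v)) hβ.le
      _ = β * ‖v‖ := by ring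
  have hlow : ∀ v : E, (m - β) * ‖v‖ ≤ ‖S₀ v‖ := by
    intro v
    have h1 : ‖A v‖ - ‖B (P v)‖ ≤ ‖A v + B (P v)‖ := by
      have h := norm_le_add_norm_add (A v) (B (P v))
      linarith
    have h2 : (m - β) * ‖v‖ ≤ ‖A v‖ - ‖B (P v)‖ := by
      nlinarith [hA v, hBP v]
    calc (m - β) * ‖v‖ ≤ ‖A v‖ - ‖B (P v)‖ := h2
      _ ≤ ‖A v + B (P v)‖ := h1
      _ = ‖S₀ v‖ := by simp [hS₀]
  have hinj : Function.Injective S₀ := by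
    intro x y hxy
    have h0 : S₀ (x - y) = 0 := by simp [map_sub, hxy]
    have h := hlow (x - y)
    rw [h0, norm_zero] at h
    have hxy0 : ‖x - y‖ ≤ 0 := by nlinarith [norm_nonneg (x - y)]
    exact sub_eq_zero.mp (norm_le_zero_iff.mp hxy0)
  have hinj' : Function.Injective (S₀ : E →ₗ[ℝ] E) := hinj
  have hbij : Function.Bijective (S₀ : E →ₗ[ℝ] E) :=
    ⟨hinj', LinearMap.injective_iff_surjective.mp hinj'⟩
  let S : E ≃L[ℝ] E :=
    (LinearEquiv.ofBijective (S₀ : E →ₗ[ℝ] E) hbij).toContinuousLinearEquiv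
  have hScoe : (S : E →L[ℝ] E) = S₀ := by ext v; rfl
  have hmain : ‖(C + D.comp P).comp (S.symm : E →L[ℝ] E)‖ ≤ (‖D‖ + β) / (m - β) := by
    have hbound : ∀ w : E,
        ‖((C + D.comp P).comp (S.symm : E →L[ℝ] E)) w‖ ≤ (‖D‖ + β) / (m - β) * ‖w‖ := by
      intro w
      set v : E := S.symm w with hv
      have hwv : S₀ v = w := by
        have h := S.apply_symm_apply w
        have h2 : S (S.symm w) = S₀ (S.symm w) := by
          rw [← hScoe]; rfl
        rw [h2] at h
        exact h
      have hvw : (m - β) * ‖v‖ ≤ ‖w‖ := by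
        have := hlow v; rwa [hwv] at this
      have hnum : ‖C v + D (P v)‖ ≤ (‖D‖ + β) * ‖v‖ := by
        have h1 : ‖C v‖ ≤ β * ‖v‖ :=
          le_trans (C.le_opNorm v) (mul_le_mul_of_nonneg_right hC (norm_nonneg _))
        have h2 : ‖D (P v)‖ ≤ ‖D‖ * ‖v‖ := by
          calc ‖D (P v)‖ ≤ ‖D‖ * ‖P v‖ := D.le_opNorm _
            _ ≤ ‖D‖ * (1 * ‖v‖) := by
                refine mul_le_mul_of_nonneg_left ?_ (norm_nonneg D)
                calc ‖P v‖ ≤ ‖P‖ * ‖v‖ := P.le_opNorm v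
                  _ ≤ 1 * ‖v‖ := mul_le_mul_of_nonneg_right hP (norm_nonneg v)
            _ = ‖D‖ * ‖v‖ := by ring
        calc ‖C v + D (P v)‖ ≤ ‖C v‖ + ‖D (P v)‖ := norm_add_le _ _
          _ ≤ (‖D‖ + β) * ‖v‖ := by linarith
      have happ : ((C + D.comp P).comp (S.symm : E →L[ℝ] E)) w = C v + D (P v) := by
        simp [hv]
      rw [happ]
      rw [div_mul_eq_mul_div, le_div_iff₀ hmβ]
      have hDβ : (0:ℝ) ≤ ‖D‖ + β := by positivity
      calc ‖C v + D (P v)‖ * (m - β) ≤ ((‖D‖ + β) * ‖v‖) * (m - β) :=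
            mul_le_mul_of_nonneg_right hnum hmβ.le
        _ = (‖D‖ + β) * ((m - β) * ‖v‖) := by ring
        _ ≤ (‖D‖ + β) * ‖w‖ := mul_le_mul_of_nonneg_left hvw hDβ
    exact ContinuousLinearMap.opNorm_le_bound _ (by positivity) hbound
  exact ⟨S, hScoe, hmain, fun h => hmain.trans h⟩
end

section
/- Let E and F be finite-dimensional real normed vector spaces, let 0 < β < m, and let A : E → E, B : F → E, C : E → F, D : F → F be continuous linear maps with ‖A v‖ ≥ m·‖v‖ for all v ∈ E, ‖B‖ ≤ β, ‖C‖ ≤ β, and (‖D‖ + β)/(m − β) ≤ 1. Define T(P) := (C + D ∘ P) ∘ (A + B ∘ P)^{-1} for continuous linear P : E → F with ‖P‖ ≤ 1. Then for all P, P' : E → F with ‖P‖ ≤ 1 and ‖P'‖ ≤ 1, one has ‖T(P) − T(P')‖ ≤ ((‖D‖ + β)/(m − β))·‖P − P'‖; in particular, if (‖D‖ + β)/(m − β) < 1 then T is a contraction on the closed unit ball of the space of continuous linear maps from E to F. -/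
/-- The graph transform T(P) = (C + D ∘ P) ∘ (A + B ∘ P)⁻¹ is Lipschitz on the
closed unit ball with constant (‖D‖ + β)/(m − β); in particular it is a
contraction there when this constant is < 1. -/
theorem graph_transform_contraction
    {E F : Type*} [NormedAddCommGroup E] [NormedSpace ℝ E]
    [NormedAddCommGroup F] [NormedSpace ℝ F]
    [FiniteDimensional ℝ E] [FiniteDimensional ℝ F]
    (m β : ℝ) (hβ : 0 < β) (hβm : β < m)
    (A : E →L[ℝ] E) (B : F →L[ℝ] E) (C : E →L[ℝ] F) (D : F →L[ℝ] F)
    (hA : ∀ v : E, m * ‖v‖ ≤ ‖A v‖) (hB : ‖B‖ ≤ β) (hC : ‖C‖ ≤ β)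
    (hκ : (‖D‖ + β) / (m - β) ≤ 1) :
    ∀ P P' : E →L[ℝ] F, ‖P‖ ≤ 1 → ‖P'‖ ≤ 1 →
      ∀ S S' : E ≃L[ℝ] E,
        (S : E →L[ℝ] E) = A + B.comp P → (S' : E →L[ℝ] E) = A + B.comp P' →
        ‖(C + D.comp P).comp (S.symm : E →L[ℝ] E) -
            (C + D.comp P').comp (S'.symm : E →L[ℝ] E)‖ ≤
          ((‖D‖ + β) / (m - β)) * ‖P - P'‖ := by
  intro P P' hP hP' S S' hS hS'
  have hm : (0:ℝ) < m - β := by linarith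
  set μ : ℝ := (m - β)⁻¹ with hμdef
  have hμ : 0 ≤ μ := by positivity
  have hD : 0 ≤ ‖D‖ := norm_nonneg _
  -- bound on inverses
  have key : ∀ (Q : E →L[ℝ] F), ‖Q‖ ≤ 1 → ∀ (T : E ≃L[ℝ] E),
      (T : E →L[ℝ] E) = A + B.comp Q → ‖(T.symm : E →L[ℝ] E)‖ ≤ μ := by
    intro Q hQ T hT
    apply ContinuousLinearMap.opNorm_le_bound _ hμ
    intro w
    set v := T.symm w with hv
    have hw : A v + B (Q v) = w := by
      have := T.apply_symm_apply w
      rw [show T (T.symm w) = (T : E →L[ℝ] E) v from rfl, hT] at this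
      simpa using this
    have h1 : ‖B (Q v)‖ ≤ β * ‖v‖ := by
      calc ‖B (Q v)‖ ≤ ‖B‖ * ‖Q v‖ := B.le_opNorm _
        _ ≤ β * (‖Q‖ * ‖v‖) := by
            apply mul_le_mul hB (Q.le_opNorm v) (norm_nonneg _) (le_of_lt hβ)
        _ ≤ β * (1 * ‖v‖) := by
            apply mul_le_mul_of_nonneg_left _ (le_of_lt hβ)
            exact mul_le_mul_of_nonneg_right hQ (norm_nonneg _)
        _ = β * ‖v‖ := by ring
    have h2 : (m - β) * ‖v‖ ≤ ‖w‖ := by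
      have h3 : ‖A v‖ ≤ ‖A v + B (Q v)‖ + ‖B (Q v)‖ := by
        have := norm_sub_le (A v + B (Q v)) (B (Q v))
        simpa using this
      have := hA v
      rw [hw] at h3
      linarith
    rw [hμdef]
    have hvv : ‖((T.symm : E →L[ℝ] E)) w‖ = ‖v‖ := rfl
    rw [hvv, inv_mul_eq_div, le_div_iff₀ hm]
    nlinarith [h2]
  set X : E →L[ℝ] E := (S.symm : E →L[ℝ] E) with hX
  set Y : E →L[ℝ] E := (S'.symm : E →L[ℝ] E) with hY
  have hXn : ‖X‖ ≤ μ := key P hP S hS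
  have hYn : ‖Y‖ ≤ μ := key P' hP' S' hS'
  -- pointwise difference of blocks
  have hz : ∀ z : E, B ((P' - P) z) = (S' : E →L[ℝ] E) z - (S : E →L[ℝ] E) z := by
    intro z
    rw [hS, hS']
    simp [map_sub]
  -- identity for difference of inverses
  have hXY : X - Y = (X.comp (B.comp (P' - P))).comp Y := by
    ext x
    have h1 : B ((P' - P) (Y x)) = (S' : E →L[ℝ] E) (Y x) - (S : E →L[ℝ] E) (Y x) :=
      hz (Y x)
    have h2 : (S' : E →L[ℝ] E) (Y x) = x := S'.apply_symm_apply x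
    have h3 : X ((S : E →L[ℝ] E) (Y x)) = Y x := S.symm_apply_apply _
    simp only [ContinuousLinearMap.sub_apply] at h1
    simp only [ContinuousLinearMap.sub_apply, ContinuousLinearMap.comp_apply]
    rw [h1, map_sub, h2, h3]
  -- decomposition
  have hdec : (C + D.comp P).comp X - (C + D.comp P').comp Y
      = (C + D.comp P).comp (X - Y) + (D.comp (P - P')).comp Y := by
    ext x
    simp only [ContinuousLinearMap.sub_apply, ContinuousLinearMap.add_apply,
      ContinuousLinearMap.comp_apply, map_sub]
    abel
  set k : ℝ := ‖P - P'‖ with hk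
  have hk0 : 0 ≤ k := norm_nonneg _
  have hCDP : ‖C + D.comp P‖ ≤ β + ‖D‖ := by
    calc ‖C + D.comp P‖ ≤ ‖C‖ + ‖D.comp P‖ := norm_add_le _ _
      _ ≤ β + ‖D‖ * ‖P‖ := add_le_add hC (D.opNorm_comp_le P)
      _ ≤ β + ‖D‖ * 1 := by
          exact add_le_add (le_refl β) (mul_le_mul_of_nonneg_left hP hD)
      _ = β + ‖D‖ := by ring
  have hXYn : ‖X - Y‖ ≤ μ * (β * (k * μ)) := by
    rw [hXY]
    calc ‖(X.comp (B.comp (P' - P))).comp Y‖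
        ≤ ‖X.comp (B.comp (P' - P))‖ * ‖Y‖ := ContinuousLinearMap.opNorm_comp_le _ _
      _ ≤ ‖X‖ * ‖B.comp (P' - P)‖ * ‖Y‖ := by
          apply mul_le_mul_of_nonneg_right (ContinuousLinearMap.opNorm_comp_le _ _)
            (norm_nonneg _)
      _ ≤ ‖X‖ * (‖B‖ * ‖P' - P‖) * ‖Y‖ := by
          apply mul_le_mul_of_nonneg_right _ (norm_nonneg _)
          exact mul_le_mul_of_nonneg_left (B.opNorm_comp_le _) (norm_nonneg _)
      _ = ‖X‖ * (‖B‖ * k) * ‖Y‖ := by rw [norm_sub_rev]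
      _ ≤ μ * (β * k) * μ := by
          apply mul_le_mul _ hYn (norm_nonneg _) (by positivity)
          exact mul_le_mul hXn (mul_le_mul hB le_rfl hk0 (le_of_lt hβ))
            (by positivity) hμ
      _ = μ * (β * (k * μ)) := by ring
  have hsecond : ‖(D.comp (P - P')).comp Y‖ ≤ ‖D‖ * k * μ := by
    calc ‖(D.comp (P - P')).comp Y‖ ≤ ‖D.comp (P - P')‖ * ‖Y‖ :=
        ContinuousLinearMap.opNorm_comp_le _ _
      _ ≤ ‖D‖ * k * μ := by
          apply mul_le_mul (D.opNorm_comp_le _) hYn (norm_nonneg _) (by positivity)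
  have hκ' : (‖D‖ + β) * μ ≤ 1 := by
    rw [div_eq_mul_inv] at hκ; exact hκ
  rw [hdec] at *
  rw [div_eq_mul_inv]
  calc ‖(C + D.comp P).comp (X - Y) + (D.comp (P - P')).comp Y‖
      ≤ ‖(C + D.comp P).comp (X - Y)‖ + ‖(D.comp (P - P')).comp Y‖ := norm_add_le _ _
    _ ≤ (β + ‖D‖) * (μ * (β * (k * μ))) + ‖D‖ * k * μ := by
        apply add_le_add _ hsecond
        calc ‖(C + D.comp P).comp (X - Y)‖ ≤ ‖C + D.comp P‖ * ‖X - Y‖ :=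
            ContinuousLinearMap.opNorm_comp_le _ _
          _ ≤ (β + ‖D‖) * (μ * (β * (k * μ))) :=
            mul_le_mul hCDP hXYn (norm_nonneg _) (by linarith)
    _ ≤ (‖D‖ + β) * μ * k := by nlinarith [mul_nonneg (mul_nonneg (mul_nonneg hμ hk0) hβ.le) (sub_nonneg.2 hκ')]
end

section
/- Let E and F be finite-dimensional real normed vector spaces, let β > 0 and κ ∈ (0,1), and for each j ∈ ℤ let A_j : E → E, B_j : F → E, C_j : E → F, D_j : F → F be continuous linear maps and m_j > β real numbers such that ‖A_j v‖ ≥ m_j·‖v‖ for all v ∈ E, ‖B_j‖ ≤ β, ‖C_j‖ ≤ β, and (‖D_j‖ + β)/(m_j − β) ≤ κ. Then there exists a unique family of continuous linear maps P_j : E → F (j ∈ ℤ) with ‖P_j‖ ≤ 1 for all j satisfying the invariance relation P_{j+1} ∘ (A_j + B_j ∘ P_j) = C_j + D_j ∘ P_j for every j ∈ ℤ; equivalently, the block operators L_j(u,s) = (A_j u + B_j s, C_j u + D_j s) map the graph of P_j onto the graph of P_{j+1}. -/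
set_option maxHeartbeats 1000000

open ContinuousLinearMap in
/-- The graph transform for one step, with all its properties. -/
lemma invariant_graph_transform_step
    {E F : Type*} [NormedAddCommGroup E] [NormedSpace ℝ E]
    [NormedAddCommGroup F] [NormedSpace ℝ F]
    [FiniteDimensional ℝ E] [FiniteDimensional ℝ F]
    (β κ mj : ℝ) (hβ : 0 < β) (hκ0 : 0 < κ) (hκ1 : κ < 1) (hm : β < mj)
    (A : E →L[ℝ] E) (B : F →L[ℝ] E) (C : E →L[ℝ] F) (D : F →L[ℝ] F)
    (hA : ∀ v : E, mj * ‖v‖ ≤ ‖A v‖) (hB : ‖B‖ ≤ β) (hC : ‖C‖ ≤ β)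
    (hD : (‖D‖ + β) / (mj - β) ≤ κ) :
    ∃ Γ : (E →L[ℝ] F) → (E →L[ℝ] F),
      (∀ P, ‖P‖ ≤ 1 → ‖Γ P‖ ≤ κ) ∧
      (∀ P, ‖P‖ ≤ 1 → (Γ P).comp (A + B.comp P) = C + D.comp P) ∧
      (∀ P R, ‖P‖ ≤ 1 → R.comp (A + B.comp P) = C + D.comp P → R = Γ P) ∧
      (∀ P Q, ‖P‖ ≤ 1 → ‖Q‖ ≤ 1 → ‖Γ P - Γ Q‖ ≤ κ * ‖P - Q‖) := by
  have hmβ : 0 < mj - β := sub_pos.mpr hm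
  have hDκ : ‖D‖ + β ≤ κ * (mj - β) := by
    rw [div_le_iff₀ hmβ] at hD; linarith
  -- lower bound for A + B ∘ P when ‖P‖ ≤ 1
  have hlow : ∀ P : E →L[ℝ] F, ‖P‖ ≤ 1 → ∀ v : E,
      (mj - β) * ‖v‖ ≤ ‖(A + B.comp P) v‖ := by
    intro P hP v
    have h1 : ‖B (P v)‖ ≤ β * ‖v‖ := by
      calc ‖B (P v)‖ ≤ ‖B‖ * ‖P v‖ := B.le_opNorm _
        _ ≤ β * (‖P‖ * ‖v‖) := by
            gcongr
            exact P.le_opNorm v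
        _ ≤ β * (1 * ‖v‖) := by gcongr
        _ = β * ‖v‖ := by ring
    have h2 := hA v
    have h3 : ‖A v‖ ≤ ‖A v + B (P v)‖ + ‖B (P v)‖ := by
      have := norm_add_le (A v + B (P v)) (-(B (P v)))
      simpa using this
    have h4 : (A + B.comp P) v = A v + B (P v) := rfl
    rw [h4]
    linarith
  -- the equivalence
  have key : ∀ P : E →L[ℝ] F, ‖P‖ ≤ 1 → ∃ e : E ≃L[ℝ] E,
      (e : E → E) = ⇑(A + B.comp P) := by
    intro P hP
    have hinj : Function.Injective ⇑(A + B.comp P) := by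
      intro v w hvw
      have h0 : (A + B.comp P) (v - w) = 0 := by
        rw [map_sub, hvw, sub_self]
      have h1 := hlow P hP (v - w)
      rw [h0, norm_zero] at h1
      have h2 : ‖v - w‖ ≤ 0 := by nlinarith
      have h3 : v - w = 0 := by
        simpa using le_antisymm h2 (norm_nonneg _)
      exact sub_eq_zero.mp h3
    exact ⟨(LinearEquiv.ofInjectiveEndo (A + B.comp P).toLinearMap
      hinj).toContinuousLinearEquiv, rfl⟩
  choose e he using key
  classical
  -- (A + B ∘ P) ∘ (e P hP).symm = id pointwise
  have hgs : ∀ (P : E →L[ℝ] F) (hP : ‖P‖ ≤ 1) (w : E),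
      (A + B.comp P) ((e P hP).symm w) = w := by
    intro P hP w
    have := (e P hP).apply_symm_apply w
    rwa [show (e P hP) ((e P hP).symm w) = (A + B.comp P) ((e P hP).symm w) from
      congrFun (he P hP) _] at this
  have hsg : ∀ (P : E →L[ℝ] F) (hP : ‖P‖ ≤ 1) (v : E),
      (e P hP).symm ((A + B.comp P) v) = v := by
    intro P hP v
    rw [← congrFun (he P hP) v]
    exact (e P hP).symm_apply_apply v
  -- the invariance equation for the transform
  have heq : ∀ (P : E →L[ℝ] F) (hP : ‖P‖ ≤ 1),
      ((C + D.comp P).comp ((e P hP).symm : E →L[ℝ] E)).comp (A + B.comp P)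
        = C + D.comp P := by
    intro P hP
    ext v
    show (C + D.comp P) ((e P hP).symm ((A + B.comp P) v)) = (C + D.comp P) v
    rw [hsg P hP v]
  -- the norm bound for the transform
  have hnorm : ∀ (P : E →L[ℝ] F) (hP : ‖P‖ ≤ 1),
      ‖(C + D.comp P).comp ((e P hP).symm : E →L[ℝ] E)‖ ≤ κ := by
    intro P hP
    apply opNorm_le_bound _ hκ0.le
    intro w
    set v := (e P hP).symm w with hv
    have hw : (A + B.comp P) v = w := hgs P hP w
    have h1 : ((C + D.comp P).comp ((e P hP).symm : E →L[ℝ] E)) w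
        = C v + D (P v) := rfl
    rw [h1]
    have h2 : ‖C v + D (P v)‖ ≤ (‖C‖ + ‖D‖) * ‖v‖ := by
      calc ‖C v + D (P v)‖ ≤ ‖C v‖ + ‖D (P v)‖ := norm_add_le _ _
        _ ≤ ‖C‖ * ‖v‖ + ‖D‖ * ‖P v‖ := by
            gcongr
            exacts [C.le_opNorm v, D.le_opNorm _]
        _ ≤ ‖C‖ * ‖v‖ + ‖D‖ * (1 * ‖v‖) := by
            gcongr
            calc ‖P v‖ ≤ ‖P‖ * ‖v‖ := P.le_opNorm v
              _ ≤ 1 * ‖v‖ := by gcongr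
        _ = (‖C‖ + ‖D‖) * ‖v‖ := by ring
    have h3 : (‖C‖ + ‖D‖) * ‖v‖ ≤ κ * (mj - β) * ‖v‖ := by
      have : ‖C‖ + ‖D‖ ≤ κ * (mj - β) := by linarith
      gcongr
    have h4 := hlow P hP v
    rw [hw] at h4
    nlinarith [norm_nonneg v, norm_nonneg w]
  refine ⟨fun P => if h : ‖P‖ ≤ 1 then
      (C + D.comp P).comp ((e P h).symm : E →L[ℝ] E) else 0, ?_, ?_, ?_, ?_⟩
  · intro P hP; simp only [dif_pos hP]; exact hnorm P hP
  · intro P hP; simp only [dif_pos hP]; exact heq P hP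
  · -- uniqueness of the transform
    intro P R hP hR
    simp only [dif_pos hP]
    ext w
    have hw : (A + B.comp P) ((e P hP).symm w) = w := hgs P hP w
    have h1 := ContinuousLinearMap.ext_iff.mp hR ((e P hP).symm w)
    simp only [comp_apply] at h1
    rw [hw] at h1
    show R w = (C + D.comp P) ((e P hP).symm w)
    exact h1
  · -- Lipschitz
    intro P Q hP hQ
    simp only [dif_pos hP, dif_pos hQ]
    set ΓP := (C + D.comp P).comp ((e P hP).symm : E →L[ℝ] E) with hΓP
    set ΓQ := (C + D.comp Q).comp ((e Q hQ).symm : E →L[ℝ] E) with hΓQ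
    apply opNorm_le_bound _ (by positivity)
    intro w
    set v := (e P hP).symm w with hv
    have hw : (A + B.comp P) v = w := hgs P hP w
    have hPQv : ‖(P - Q) v‖ ≤ ‖P - Q‖ * ‖v‖ := (P - Q).le_opNorm v
    -- ΓP w = C v + D (P v)
    have h1 : ΓP w = C v + D (P v) := rfl
    -- w = (A + B ∘ Q) v + B ((P - Q) v)
    have hw2 : w = (A + B.comp Q) v + B ((P - Q) v) := by
      rw [← hw]
      show (A v + B (P v)) = (A v + B (Q v)) + B (P v - Q v)
      rw [map_sub]
      abel
    -- ΓQ ((A + B ∘ Q) v) = C v + D (Q v)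
    have h2 : ΓQ ((A + B.comp Q) v) = C v + D (Q v) := by
      have := ContinuousLinearMap.ext_iff.mp (heq Q hQ) v
      simpa only [hΓQ, comp_apply, add_apply] using this
    have h3 : ΓQ w = C v + D (Q v) + ΓQ (B ((P - Q) v)) := by
      rw [hw2, map_add, h2]
    have h4 : (ΓP - ΓQ) w = D ((P - Q) v) - ΓQ (B ((P - Q) v)) := by
      rw [ContinuousLinearMap.sub_apply, h1, h3]
      have : D ((P - Q) v) = D (P v) - D (Q v) := by
        rw [show (P - Q) v = P v - Q v from rfl, map_sub]
      rw [this]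
      abel
    rw [h4]
    have h5 : ‖ΓQ (B ((P - Q) v))‖ ≤ κ * (β * ‖(P - Q) v‖) := by
      calc ‖ΓQ (B ((P - Q) v))‖ ≤ ‖ΓQ‖ * ‖B ((P - Q) v)‖ := ΓQ.le_opNorm _
        _ ≤ κ * (β * ‖(P - Q) v‖) := by
            apply mul_le_mul (hnorm Q hQ) ?_ (norm_nonneg _) hκ0.le
            calc ‖B ((P - Q) v)‖ ≤ ‖B‖ * ‖(P - Q) v‖ := B.le_opNorm _
              _ ≤ β * ‖(P - Q) v‖ := by gcongr
    have h6 : ‖D ((P - Q) v) - ΓQ (B ((P - Q) v))‖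
        ≤ (‖D‖ + κ * β) * ‖(P - Q) v‖ := by
      have := (norm_sub_le (D ((P - Q) v)) (ΓQ (B ((P - Q) v)))).trans
        (add_le_add (D.le_opNorm ((P - Q) v)) h5)
      linarith
    have h7 : (‖D‖ + κ * β) * ‖(P - Q) v‖ ≤ κ * (mj - β) * (‖P - Q‖ * ‖v‖) := by
      have e1 : ‖D‖ + κ * β ≤ κ * (mj - β) := by nlinarith [norm_nonneg D]
      have e2 : (0:ℝ) ≤ ‖D‖ + κ * β := by positivity
      calc (‖D‖ + κ * β) * ‖(P - Q) v‖ ≤ (‖D‖ + κ * β) * (‖P - Q‖ * ‖v‖) := by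
            gcongr
        _ ≤ κ * (mj - β) * (‖P - Q‖ * ‖v‖) := by
            apply mul_le_mul_of_nonneg_right e1 (by positivity)
    have h8 := hlow P hP v
    rw [hw] at h8
    have h9 : κ * (mj - β) * (‖P - Q‖ * ‖v‖) ≤ κ * ‖P - Q‖ * ‖w‖ := by
      calc κ * (mj - β) * (‖P - Q‖ * ‖v‖) = κ * ‖P - Q‖ * ((mj - β) * ‖v‖) := by
            ring
        _ ≤ κ * ‖P - Q‖ * ‖w‖ := by
            apply mul_le_mul_of_nonneg_left h8 (by positivity)
    linarith

open BoundedContinuousFunction in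
/-- Existence and uniqueness of the invariant family of graphs: under the
semi-hyperbolicity bounds there is a unique ℤ-indexed family (P_j) of linear
maps of norm at most 1 with P_{j+1} ∘ (A_j + B_j ∘ P_j) = C_j + D_j ∘ P_j. -/
theorem invariant_graph_family_exists_unique
    {E F : Type*} [NormedAddCommGroup E] [NormedSpace ℝ E]
    [NormedAddCommGroup F] [NormedSpace ℝ F]
    [FiniteDimensional ℝ E] [FiniteDimensional ℝ F]
    (β κ : ℝ) (hβ : 0 < β) (hκ : κ ∈ Set.Ioo (0 : ℝ) 1)
    (A : ℤ → E →L[ℝ] E) (B : ℤ → F →L[ℝ] E)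
    (C : ℤ → E →L[ℝ] F) (D : ℤ → F →L[ℝ] F)
    (m : ℤ → ℝ) (hm : ∀ j, β < m j)
    (hA : ∀ j, ∀ v : E, m j * ‖v‖ ≤ ‖A j v‖)
    (hB : ∀ j, ‖B j‖ ≤ β) (hC : ∀ j, ‖C j‖ ≤ β)
    (hD : ∀ j, (‖D j‖ + β) / (m j - β) ≤ κ) :
    ∃! P : ℤ → E →L[ℝ] F,
      (∀ j, ‖P j‖ ≤ 1) ∧
      (∀ j, (P (j + 1)).comp (A j + (B j).comp (P j)) = C j + (D j).comp (P j)) := by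
  obtain ⟨hκ0, hκ1⟩ := hκ
  choose Γ hΓnorm hΓeq hΓuniq hΓlip using fun j =>
    invariant_graph_transform_step β κ (m j) hβ hκ0 hκ1 (hm j)
      (A j) (B j) (C j) (D j) (hA j) (hB j) (hC j) (hD j)
  classical
  -- the complete space of sequences of maps of norm ≤ 1
  set X := BoundedContinuousFunction ℤ (E →L[ℝ] F) with hX
  set S : Set X := {f | ∀ j, ‖f j‖ ≤ 1} with hSdef
  have hSclosed : IsClosed S := by
    have : S = ⋂ j, {f : X | ‖f j‖ ≤ 1} := by
      ext f; simp [hSdef, Set.mem_iInter]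
    rw [this]
    exact isClosed_iInter fun j =>
      isClosed_le ((continuous_eval_const
        (F := X) j).norm) continuous_const
  haveI : CompleteSpace S := hSclosed.completeSpace_coe
  haveI : Nonempty S := ⟨⟨0, fun j => by
    rw [show ((0 : X)) j = 0 from rfl, norm_zero]; exact zero_le_one⟩⟩
  -- the graph-transform operator on S
  set T : S → S := fun f =>
    ⟨ofNormedAddCommGroup (fun j => Γ (j - 1) (f.1 (j - 1)))
      continuous_of_discreteTopology κ (fun j => hΓnorm _ _ (f.2 _)),
      fun j => by
        exact
          (hΓnorm (j - 1) (f.1 (j - 1)) (f.2 _)).trans hκ1.le⟩ with hT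
  have hTapp : ∀ (f : S) (j : ℤ), (T f).1 j = Γ (j - 1) (f.1 (j - 1)) := by
    intro f j; rfl
  have hlip : LipschitzWith ⟨κ, hκ0.le⟩ T := by
    apply LipschitzWith.of_dist_le_mul
    intro f g
    rw [Subtype.dist_eq]
    show dist (T f).1 (T g).1 ≤ κ * dist f g
    have h0 : (0:ℝ) ≤ κ * dist f g := by positivity
    rw [BoundedContinuousFunction.dist_le h0]
    intro j
    rw [show (T f).1 j = Γ (j - 1) (f.1 (j - 1)) from rfl,
      show (T g).1 j = Γ (j - 1) (g.1 (j - 1)) from rfl, dist_eq_norm]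
    calc ‖Γ (j - 1) (f.1 (j - 1)) - Γ (j - 1) (g.1 (j - 1))‖
        ≤ κ * ‖f.1 (j - 1) - g.1 (j - 1)‖ := hΓlip _ _ _ (f.2 _) (g.2 _)
      _ ≤ κ * dist f g := by
          rw [← dist_eq_norm]
          have h1 : dist (f.1 (j - 1)) (g.1 (j - 1)) ≤ dist f.1 g.1 :=
            BoundedContinuousFunction.dist_coe_le_dist _
          rw [Subtype.dist_eq]
          exact mul_le_mul_of_nonneg_left h1 hκ0.le
  have hcontr : ContractingWith ⟨κ, hκ0.le⟩ T :=
    ⟨by exact_mod_cast hκ1, hlip⟩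
  set P₀ : S := ContractingWith.fixedPoint T hcontr with hP₀
  have hfix : T P₀ = P₀ := hcontr.fixedPoint_isFixedPt
  have hfix' : ∀ j : ℤ, Γ (j - 1) (P₀.1 (j - 1)) = P₀.1 j := by
    intro j
    conv_rhs => rw [← hfix]
    rfl
  have hfix'' : ∀ j : ℤ, Γ j (P₀.1 j) = P₀.1 (j + 1) := by
    intro j
    simpa using hfix' (j + 1)
  refine ⟨fun j => P₀.1 j, ⟨fun j => P₀.2 j, fun j => ?_⟩, ?_⟩
  · show (P₀.1 (j + 1)).comp (A j + (B j).comp (P₀.1 j))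
      = C j + (D j).comp (P₀.1 j)
    rw [← hfix'' j]
    exact hΓeq j _ (P₀.2 j)
  · -- uniqueness
    rintro Q ⟨hQ1, hQ2⟩
    set Q' : S := ⟨ofNormedAddCommGroup Q continuous_of_discreteTopology 1 hQ1,
      fun j => by exact hQ1 j⟩ with hQ'
    have hQapp : ∀ j, Q'.1 j = Q j := fun j => rfl
    have hfixQ : T Q' = Q' := by
      apply Subtype.ext
      apply BoundedContinuousFunction.ext
      intro j
      rw [show ((T Q' : S) : X) j = Γ (j - 1) (Q'.1 (j - 1)) from rfl, hQapp,
        hQapp]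
      refine (hΓuniq (j - 1) (Q (j - 1)) (Q j) (hQ1 _) ?_).symm
      simpa using hQ2 (j - 1)
    have : Q' = P₀ := hcontr.fixedPoint_unique hfixQ
    funext j
    calc Q j = Q'.1 j := rfl
      _ = P₀.1 j := by rw [this]
end

section
/- Let E and F be real normed vector spaces and equip X = E × F with the sup norm. Let 0 < λ < λ̃ < 1 and η > 0, and let Φ̂ : X → X be a map that is C¹ on the closed ball B̄(0,η) of X such that the E→E block A of the derivative DΦ̂(0) (defined by A v = fst(DΦ̂(0)(v,0))) satisfies ‖A v‖ ≥ λ^{-1}·‖v‖ for all v ∈ E, and ‖DΦ̂(ξ) − DΦ̂(0)‖ ≤ (λ̃ − λ)/4 for all ξ ∈ X with ‖ξ‖ ≤ η. Then for every s ∈ F with ‖s‖ ≤ η, the map Φ : E → E defined by Φ(w) = fst(Φ̂(w, s)) − fst(Φ̂(0, s)) is expanding on the closed η-ball of E: for all w, w' ∈ E with ‖w‖ ≤ η and ‖w'‖ ≤ η, one has ‖Φ(w) − Φ(w')‖ ≥ λ̃^{-1}·‖w − w'‖. -/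
private lemma rate_aux (lam lamt : ℝ) (h0 : 0 < lam) (h1 : lam < lamt) (h2 : lamt < 1) :
    lamt⁻¹ + (lamt - lam) / 4 ≤ lam⁻¹ := by
  have h0t : 0 < lamt := h0.trans h1
  have hml : lam * lamt < 1 := by nlinarith
  have hd : lam⁻¹ - lamt⁻¹ = (lamt - lam) / (lam * lamt) := by
    field_simp
  have hge : (lamt - lam) ≤ (lamt - lam) / (lam * lamt) := by
    rw [le_div_iff₀ (mul_pos h0 h0t)]
    nlinarith
  linarith

/-- Lemma 3.2: the unstable-component map Φ(w) = fst(Φ̂(w,s)) − fst(Φ̂(0,s)) is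
expanding with rate λ̃⁻¹ on the closed η-ball, provided the unstable block of
DΦ̂(0) expands by λ⁻¹ and the derivative varies by at most (λ̃−λ)/4 on the
closed η-ball of X = E × F (with the sup norm). -/
theorem unstable_component_map_expanding
    {E F : Type*} [NormedAddCommGroup E] [NormedSpace ℝ E]
    [NormedAddCommGroup F] [NormedSpace ℝ F]
    (lam lamt η : ℝ) (h0 : 0 < lam) (h1 : lam < lamt) (h2 : lamt < 1) (hη : 0 < η)
    (Φhat : E × F → E × F) (DΦ : E × F → (E × F) →L[ℝ] E × F)
    (hderiv : ∀ ξ ∈ Metric.closedBall (0 : E × F) η, HasFDerivAt Φhat (DΦ ξ) ξ)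
    (hcont : ContinuousOn DΦ (Metric.closedBall (0 : E × F) η))
    (hA : ∀ v : E, lam⁻¹ * ‖v‖ ≤ ‖(DΦ 0 (v, 0)).1‖)
    (hclose : ∀ ξ : E × F, ‖ξ‖ ≤ η → ‖DΦ ξ - DΦ 0‖ ≤ (lamt - lam) / 4) :
    ∀ s : F, ‖s‖ ≤ η → ∀ w w' : E, ‖w‖ ≤ η → ‖w'‖ ≤ η →
      lamt⁻¹ * ‖w - w'‖ ≤
        ‖((Φhat (w, s)).1 - (Φhat (0, s)).1) -
          ((Φhat (w', s)).1 - (Φhat (0, s)).1)‖ := by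
  intro s hs w w' hw hw'
  have h0t : 0 < lamt := h0.trans h1
  set c : ℝ := (lamt - lam) / 4 with hc
  -- linear maps
  set inl : E →L[ℝ] E × F := ContinuousLinearMap.inl ℝ E F with hinl
  set fstm : E × F →L[ℝ] E := ContinuousLinearMap.fst ℝ E F with hfst
  set A : E →L[ℝ] E := fstm.comp ((DΦ 0).comp inl) with hAdef
  set g : E → E := fun u => (Φhat (u, s)).1 with hg
  set h : E → E := fun u => g u - A u with hh
  have hmem : ∀ u : E, ‖u‖ ≤ η → (u, s) ∈ Metric.closedBall (0 : E × F) η := by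
    intro u hu
    rw [Metric.mem_closedBall, dist_zero_right, Prod.norm_def]
    exact max_le hu hs
  -- derivative of h on the ball
  have hderivh : ∀ u ∈ Metric.closedBall (0 : E) η,
      HasFDerivWithinAt h (fstm.comp (((DΦ (u, s)) - (DΦ 0)).comp inl))
        (Metric.closedBall (0 : E) η) u := by
    intro u hu
    rw [Metric.mem_closedBall, dist_zero_right] at hu
    have h1' : HasFDerivAt (fun v : E => ((v, s) : E × F)) inl u := by
      have h0' : HasFDerivAt (fun v : E => inl v + ((0 : E), s)) inl u :=
        inl.hasFDerivAt.add_const _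
      convert h0' using 2 with v
      simp [hinl, Prod.ext_iff]
    have h2' : HasFDerivAt (fun v : E => Φhat (v, s)) ((DΦ (u, s)).comp inl) u :=
      (hderiv _ (hmem u hu)).comp u h1'
    have h3' : HasFDerivAt g (fstm.comp ((DΦ (u, s)).comp inl)) u :=
      fstm.hasFDerivAt.comp u h2'
    have h4' : HasFDerivAt h
        (fstm.comp ((DΦ (u, s)).comp inl) - A) u := h3'.sub A.hasFDerivAt
    have : fstm.comp ((DΦ (u, s)).comp inl) - A
        = fstm.comp (((DΦ (u, s)) - (DΦ 0)).comp inl) := by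
      ext v
      simp [hAdef]
    rw [this] at h4'
    exact h4'.hasFDerivWithinAt
  -- norm bound for the derivative of h
  have hbound : ∀ u ∈ Metric.closedBall (0 : E) η,
      ‖fstm.comp (((DΦ (u, s)) - (DΦ 0)).comp inl)‖ ≤ c := by
    intro u hu
    rw [Metric.mem_closedBall, dist_zero_right] at hu
    have hξ : ‖((u, s) : E × F)‖ ≤ η := by
      rw [Prod.norm_def]; exact max_le hu hs
    have hcpos : (0:ℝ) ≤ c := by rw [hc]; linarith
    refine ContinuousLinearMap.opNorm_le_bound _ hcpos ?_
    intro v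
    have h1' : ‖(((DΦ (u, s)) - (DΦ 0)) (v, 0)).1‖ ≤ ‖((DΦ (u, s)) - (DΦ 0)) (v, 0)‖ :=
      norm_fst_le _
    have h2' : ‖((DΦ (u, s)) - (DΦ 0)) (v, 0)‖ ≤ ‖(DΦ (u, s)) - (DΦ 0)‖ * ‖((v, 0) : E × F)‖ :=
      ContinuousLinearMap.le_opNorm _ _
    have h3' : ‖((v, 0) : E × F)‖ = ‖v‖ := by
      rw [Prod.norm_def]; simp [norm_nonneg]
    simp only [ContinuousLinearMap.comp_apply]
    calc ‖fstm ((((DΦ (u, s)) - (DΦ 0))) (inl v))‖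
        = ‖(((DΦ (u, s)) - (DΦ 0)) (v, 0)).1‖ := by simp [hinl, hfst]
      _ ≤ ‖(DΦ (u, s)) - (DΦ 0)‖ * ‖v‖ := by
          rw [← h3']; exact h1'.trans h2'
      _ ≤ c * ‖v‖ := by
          exact mul_le_mul_of_nonneg_right (hclose _ hξ) (norm_nonneg v)
  -- mean value inequality
  have hwmem : w ∈ Metric.closedBall (0 : E) η := by
    rw [Metric.mem_closedBall, dist_zero_right]; exact hw
  have hw'mem : w' ∈ Metric.closedBall (0 : E) η := by
    rw [Metric.mem_closedBall, dist_zero_right]; exact hw'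
  have hmv : ‖h w - h w'‖ ≤ c * ‖w - w'‖ :=
    (convex_closedBall (0 : E) η).norm_image_sub_le_of_norm_hasFDerivWithin_le
      hderivh hbound hw'mem hwmem
  -- lower bound via the expansion of A
  have hAlow : lam⁻¹ * ‖w - w'‖ ≤ ‖A (w - w')‖ := by
    have : A (w - w') = (DΦ 0 ((w - w'), 0)).1 := by simp [hAdef, hinl, hfst]
    rw [this]; exact hA _
  have hsplit : A (w - w') = (g w - g w') - (h w - h w') := by
    simp only [hh, map_sub]
    abel
  have hkey : ‖A (w - w')‖ ≤ ‖g w - g w'‖ + c * ‖w - w'‖ := by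
    rw [hsplit]
    exact (norm_sub_le _ _).trans (by linarith [hmv])
  have hrate : lamt⁻¹ + c ≤ lam⁻¹ := by
    rw [hc]; exact rate_aux lam lamt h0 h1 h2
  have hgoal : lamt⁻¹ * ‖w - w'‖ ≤ ‖g w - g w'‖ := by
    have hx := mul_le_mul_of_nonneg_right hrate (norm_nonneg (w - w'))
    rw [add_mul] at hx
    linarith
  calc lamt⁻¹ * ‖w - w'‖ ≤ ‖g w - g w'‖ := hgoal
    _ = ‖((Φhat (w, s)).1 - (Φhat (0, s)).1) -
          ((Φhat (w', s)).1 - (Φhat (0, s)).1)‖ := by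
        rw [sub_sub_sub_cancel_right]
end

section
/- Let E and F be real normed vector spaces, X = E × F with the sup norm, and let 0 < λ < λ̃ < (1+λ)/2 and η > 0. Let F̂ : X → X be C¹ on the closed ball B̄(0,η) with blocks A, B, C, D of L = DF̂(0) (A v = fst(L(v,0)), B s = fst(L(0,s)), C v = snd(L(v,0)), D s = snd(L(0,s))) satisfying ‖A v‖ ≥ λ^{-1}‖v‖ for all v ∈ E, ‖D‖ ≤ λ, ‖B‖ ≤ (1+λ−2λ̃)/4, ‖C‖ ≤ (1+λ−2λ̃)/4, and ‖DF̂(ξ) − DF̂(0)‖ ≤ (λ̃−λ)/4 for all ‖ξ‖ ≤ η. Let G : X → X be a map and d, δ ≥ 0 numbers with ‖F̂(0)‖ ≤ δ, ‖G(ξ) − F̂(ξ)‖ ≤ d for all ‖ξ‖ ≤ η, and d + δ ≤ (1−λ̃)η/2. Then for all v, v' ∈ X with ‖v‖ ≤ η and ‖v'‖ ≤ η, one has ‖fst(−G(v) + F̂(v) − F̂(0, snd v) + v')‖ ≤ λ̃^{-1}·η. -/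
/-- Lemma 3.3 (well-definedness estimate): under the semi-hyperbolicity bounds
on the blocks of DF̂(0) and smallness of the perturbation G and of F̂(0), the
vector fed into the inverse of the expanding unstable map has norm ≤ λ̃⁻¹·η. -/
theorem shadowing_operator_well_defined_estimate
    {E F : Type*} [NormedAddCommGroup E] [NormedSpace ℝ E]
    [NormedAddCommGroup F] [NormedSpace ℝ F]
    (lam lamt η d δ : ℝ) (h0 : 0 < lam) (h1 : lam < lamt)
    (h2 : lamt < (1 + lam) / 2) (hη : 0 < η) (hd : 0 ≤ d) (hδ : 0 ≤ δ)
    (Fhat : E × F → E × F) (DF : E × F → (E × F) →L[ℝ] E × F)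
    (hderiv : ∀ ξ ∈ Metric.closedBall (0 : E × F) η, HasFDerivAt Fhat (DF ξ) ξ)
    (hcont : ContinuousOn DF (Metric.closedBall (0 : E × F) η))
    (hA : ∀ v : E, lam⁻¹ * ‖v‖ ≤ ‖(DF 0 (v, 0)).1‖)
    (hD : ‖(ContinuousLinearMap.snd ℝ E F).comp
        ((DF 0).comp (ContinuousLinearMap.inr ℝ E F))‖ ≤ lam)
    (hB : ‖(ContinuousLinearMap.fst ℝ E F).comp
        ((DF 0).comp (ContinuousLinearMap.inr ℝ E F))‖ ≤ (1 + lam - 2 * lamt) / 4)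
    (hC : ‖(ContinuousLinearMap.snd ℝ E F).comp
        ((DF 0).comp (ContinuousLinearMap.inl ℝ E F))‖ ≤ (1 + lam - 2 * lamt) / 4)
    (hclose : ∀ ξ : E × F, ‖ξ‖ ≤ η → ‖DF ξ - DF 0‖ ≤ (lamt - lam) / 4)
    (G : E × F → E × F)
    (hF0 : ‖Fhat 0‖ ≤ δ)
    (hGF : ∀ ξ : E × F, ‖ξ‖ ≤ η → ‖G ξ - Fhat ξ‖ ≤ d)
    (hsum : d + δ ≤ (1 - lamt) * η / 2) :
    ∀ v v' : E × F, ‖v‖ ≤ η → ‖v'‖ ≤ η →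
      ‖(-G v + Fhat v - Fhat (0, v.2) + v').1‖ ≤ lamt⁻¹ * η := by
  intro v v' hv hv'
  have hltpos : 0 < lamt := lt_trans h0 h1
  have hlt1 : lamt < 1 := by linarith
  have hv2n : ‖((0 : E), v.2)‖ = ‖v.2‖ := by
    simp [Prod.norm_def]
  have hv2 : ‖((0 : E), v.2)‖ ≤ η := by
    rw [hv2n]; exact le_trans (norm_snd_le v) hv
  -- mean value estimate
  have hMVT : ‖Fhat ((0 : E), v.2) - Fhat 0 - DF 0 (((0 : E), v.2) - 0)‖ ≤
      (lamt - lam) / 4 * ‖(((0 : E), v.2) : E × F) - 0‖ := by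
    refine Convex.norm_image_sub_le_of_norm_hasFDerivWithin_le'
      (fun ξ hξ => (hderiv ξ hξ).hasFDerivWithinAt)
      (fun ξ hξ => hclose ξ (by simpa [Metric.mem_closedBall, dist_zero_right] using hξ))
      (convex_closedBall 0 η) ?_ ?_
    · simp [Metric.mem_closedBall, hη.le]
    · simpa [Metric.mem_closedBall, dist_zero_right] using hv2
  rw [sub_zero] at hMVT
  have hTaylor : ‖Fhat ((0 : E), v.2) - Fhat 0 - DF 0 ((0 : E), v.2)‖ ≤ (lamt - lam) / 4 * η := by
    refine le_trans hMVT ?_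
    have : 0 ≤ (lamt - lam) / 4 := by linarith
    exact mul_le_mul_of_nonneg_left hv2 this
  -- B-block estimate
  have hBv : ‖(DF 0 ((0 : E), v.2)).1‖ ≤ (1 + lam - 2 * lamt) / 4 * η := by
    have h := ((ContinuousLinearMap.fst ℝ E F).comp
        ((DF 0).comp (ContinuousLinearMap.inr ℝ E F))).le_opNorm v.2
    simp only [ContinuousLinearMap.coe_comp', Function.comp_apply,
      ContinuousLinearMap.inr_apply, ContinuousLinearMap.coe_fst'] at h
    refine le_trans h (mul_le_mul hB (le_trans (norm_snd_le v) hv) (norm_nonneg _) ?_)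
    linarith
  -- decompose the first coordinate
  have key : (-G v + Fhat v - Fhat (0, v.2) + v').1 =
      (Fhat v - G v).1 - (Fhat ((0 : E), v.2) - Fhat 0 - DF 0 ((0 : E), v.2)).1
        - (DF 0 ((0 : E), v.2)).1 - (Fhat 0).1 + v'.1 := by
    simp only [Prod.fst_add, Prod.fst_sub, Prod.fst_neg]
    abel
  rw [key]
  have b1 : ‖(Fhat v - G v).1‖ ≤ d := by
    refine le_trans (norm_fst_le _) ?_
    rw [norm_sub_rev]; exact hGF v hv
  have b2 : ‖(Fhat ((0 : E), v.2) - Fhat 0 - DF 0 ((0 : E), v.2)).1‖ ≤ (lamt - lam) / 4 * η :=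
    le_trans (norm_fst_le _) hTaylor
  have b4 : ‖(Fhat 0).1‖ ≤ δ := le_trans (norm_fst_le _) hF0
  have b5 : ‖v'.1‖ ≤ η := le_trans (norm_fst_le _) hv'
  have tri : ‖(Fhat v - G v).1 - (Fhat ((0 : E), v.2) - Fhat 0 - DF 0 ((0 : E), v.2)).1
        - (DF 0 ((0 : E), v.2)).1 - (Fhat 0).1 + v'.1‖ ≤
      ‖(Fhat v - G v).1‖ + ‖(Fhat ((0 : E), v.2) - Fhat 0 - DF 0 ((0 : E), v.2)).1‖
        + ‖(DF 0 ((0 : E), v.2)).1‖ + ‖(Fhat 0).1‖ + ‖v'.1‖ := by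
    calc _ ≤ ‖(Fhat v - G v).1 - (Fhat ((0 : E), v.2) - Fhat 0 - DF 0 ((0 : E), v.2)).1
        - (DF 0 ((0 : E), v.2)).1 - (Fhat 0).1‖ + ‖v'.1‖ := norm_add_le _ _
    _ ≤ _ := by
        gcongr
        calc _ ≤ ‖(Fhat v - G v).1 - (Fhat ((0 : E), v.2) - Fhat 0 - DF 0 ((0 : E), v.2)).1
            - (DF 0 ((0 : E), v.2)).1‖ + ‖(Fhat 0).1‖ := norm_sub_le _ _
        _ ≤ _ := by
            gcongr
            calc _ ≤ ‖(Fhat v - G v).1 - (Fhat ((0 : E), v.2) - Fhat 0 - DF 0 ((0 : E), v.2)).1‖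
                + ‖(DF 0 ((0 : E), v.2)).1‖ := norm_sub_le _ _
            _ ≤ _ := by gcongr; exact norm_sub_le _ _
  refine le_trans tri ?_
  rw [inv_mul_eq_div, le_div_iff₀ hltpos]
  nlinarith [sq_nonneg (1 - lamt), mul_pos hltpos hη, mul_le_mul_of_nonneg_right hsum hltpos.le,
    mul_le_mul_of_nonneg_right b1 hltpos.le, mul_le_mul_of_nonneg_right b2 hltpos.le,
    mul_le_mul_of_nonneg_right hBv hltpos.le, mul_le_mul_of_nonneg_right b4 hltpos.le,
    mul_le_mul_of_nonneg_right b5 hltpos.le, mul_nonneg (mul_pos hltpos hη).le (sub_pos.mpr hlt1).le]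
end

section
/- Let E and F be real normed vector spaces, X = E × F with the sup norm, and let 0 < λ < λ̃ < (1+λ)/2 and η > 0. Let F̂ : X → X be C¹ on the closed ball B̄(0,η) with blocks A, B, C, D of L = DF̂(0) (A v = fst(L(v,0)), B s = fst(L(0,s)), C v = snd(L(v,0)), D s = snd(L(0,s))) satisfying ‖A v‖ ≥ λ^{-1}‖v‖ for all v ∈ E, ‖D‖ ≤ λ, ‖B‖ ≤ (1+λ−2λ̃)/4, ‖C‖ ≤ (1+λ−2λ̃)/4, and ‖DF̂(ξ) − DF̂(0)‖ ≤ (λ̃−λ)/4 for all ‖ξ‖ ≤ η. Let G : X → X be a map and d, δ ≥ 0 numbers with ‖F̂(0)‖ ≤ δ, ‖G(ξ) − F̂(ξ)‖ ≤ d for all ‖ξ‖ ≤ η, and d + δ ≤ (1−λ̃)η/2. Then for every v ∈ X with ‖v‖ ≤ η, the stable component of G(v) satisfies ‖snd(G(v))‖ ≤ η. -/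
/-- Lemma 3.4 (invariance estimate): under the semi-hyperbolicity bounds on the
blocks of DF̂(0) and smallness of the perturbation G and of F̂(0), the stable
component of G(v) stays in the closed η-ball for every ‖v‖ ≤ η. -/
theorem shadowing_operator_stable_component_invariant
    {E F : Type*} [NormedAddCommGroup E] [NormedSpace ℝ E]
    [NormedAddCommGroup F] [NormedSpace ℝ F]
    (lam lamt η d δ : ℝ) (h0 : 0 < lam) (h1 : lam < lamt)
    (h2 : lamt < (1 + lam) / 2) (hη : 0 < η) (hd : 0 ≤ d) (hδ : 0 ≤ δ)
    (Fhat : E × F → E × F) (DF : E × F → (E × F) →L[ℝ] E × F)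
    (hderiv : ∀ ξ ∈ Metric.closedBall (0 : E × F) η, HasFDerivAt Fhat (DF ξ) ξ)
    (hcont : ContinuousOn DF (Metric.closedBall (0 : E × F) η))
    (hA : ∀ v : E, lam⁻¹ * ‖v‖ ≤ ‖(DF 0 (v, 0)).1‖)
    (hD : ‖(ContinuousLinearMap.snd ℝ E F).comp
        ((DF 0).comp (ContinuousLinearMap.inr ℝ E F))‖ ≤ lam)
    (hB : ‖(ContinuousLinearMap.fst ℝ E F).comp
        ((DF 0).comp (ContinuousLinearMap.inr ℝ E F))‖ ≤ (1 + lam - 2 * lamt) / 4)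
    (hC : ‖(ContinuousLinearMap.snd ℝ E F).comp
        ((DF 0).comp (ContinuousLinearMap.inl ℝ E F))‖ ≤ (1 + lam - 2 * lamt) / 4)
    (hclose : ∀ ξ : E × F, ‖ξ‖ ≤ η → ‖DF ξ - DF 0‖ ≤ (lamt - lam) / 4)
    (G : E × F → E × F)
    (hF0 : ‖Fhat 0‖ ≤ δ)
    (hGF : ∀ ξ : E × F, ‖ξ‖ ≤ η → ‖G ξ - Fhat ξ‖ ≤ d)
    (hsum : d + δ ≤ (1 - lamt) * η / 2) :
    ∀ v : E × F, ‖v‖ ≤ η → ‖(G v).2‖ ≤ η := by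
  intro v hv
  have hball : v ∈ Metric.closedBall (0 : E × F) η := by
    simpa [Metric.mem_closedBall, dist_zero_right] using hv
  have h0ball : (0 : E × F) ∈ Metric.closedBall (0 : E × F) η := by
    simp [hη.le]
  have hmvt : ‖Fhat v - Fhat 0 - (DF 0) (v - 0)‖ ≤ (lamt - lam) / 4 * ‖v - 0‖ :=
    (convex_closedBall _ _).norm_image_sub_le_of_norm_hasFDerivWithin_le'
      (fun x hx => (hderiv x hx).hasFDerivWithinAt)
      (fun x hx => hclose x (by simpa [dist_zero_right] using hx))
      h0ball hball
  have hmvt' : ‖Fhat v - Fhat 0 - (DF 0) v‖ ≤ (lamt - lam) / 4 * η := by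
    have := hmvt
    rw [sub_zero] at this
    refine this.trans ?_
    have h14 : (0:ℝ) ≤ (lamt - lam) / 4 := by linarith
    exact mul_le_mul_of_nonneg_left hv h14
  -- block bounds
  have hCv : ‖((DF 0) (v.1, 0)).2‖ ≤ (1 + lam - 2 * lamt) / 4 * η := by
    have h := ((ContinuousLinearMap.snd ℝ E F).comp
        ((DF 0).comp (ContinuousLinearMap.inl ℝ E F))).le_opNorm v.1
    simp only [ContinuousLinearMap.comp_apply, ContinuousLinearMap.inl_apply,
      ContinuousLinearMap.coe_snd'] at h
    refine h.trans ?_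
    have hv1 : ‖v.1‖ ≤ η := (norm_fst_le v).trans hv
    have hC0 : (0:ℝ) ≤ ‖(ContinuousLinearMap.snd ℝ E F).comp
        ((DF 0).comp (ContinuousLinearMap.inl ℝ E F))‖ := norm_nonneg _
    calc _ ≤ (1 + lam - 2 * lamt) / 4 * ‖v.1‖ := by
            apply mul_le_mul_of_nonneg_right hC (norm_nonneg _)
      _ ≤ (1 + lam - 2 * lamt) / 4 * η := by
            apply mul_le_mul_of_nonneg_left hv1; linarith
  have hDv : ‖((DF 0) (0, v.2)).2‖ ≤ lam * η := by
    have h := ((ContinuousLinearMap.snd ℝ E F).comp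
        ((DF 0).comp (ContinuousLinearMap.inr ℝ E F))).le_opNorm v.2
    simp only [ContinuousLinearMap.comp_apply, ContinuousLinearMap.inr_apply,
      ContinuousLinearMap.coe_snd'] at h
    refine h.trans ?_
    have hv2 : ‖v.2‖ ≤ η := (norm_snd_le v).trans hv
    calc _ ≤ lam * ‖v.2‖ := mul_le_mul_of_nonneg_right hD (norm_nonneg _)
      _ ≤ lam * η := mul_le_mul_of_nonneg_left hv2 h0.le
  have hsplit : ((DF 0) v).2 = ((DF 0) (v.1, 0)).2 + ((DF 0) (0, v.2)).2 := by
    have : v = (v.1, 0) + (0, v.2) := by simp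
    rw [show (DF 0) v = (DF 0) ((v.1, 0) + (0, v.2)) by rw [← this], map_add]
    rfl
  have hL : ‖((DF 0) v).2‖ ≤ (1 + lam - 2 * lamt) / 4 * η + lam * η := by
    rw [hsplit]; exact (norm_add_le _ _).trans (add_le_add hCv hDv)
  -- final decomposition
  have hdecomp : (G v).2 = (G v - Fhat v).2 + (Fhat v - Fhat 0 - (DF 0) v).2
      + ((DF 0) v).2 + (Fhat 0).2 := by
    simp [Prod.snd_sub, Prod.snd_add]; abel
  have hGFv := hGF v hv
  calc ‖(G v).2‖ ≤ ‖(G v - Fhat v).2‖ + ‖(Fhat v - Fhat 0 - (DF 0) v).2‖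
        + ‖((DF 0) v).2‖ + ‖(Fhat 0).2‖ := by
        rw [hdecomp]
        exact le_trans (norm_add_le _ _) (add_le_add (le_trans (norm_add_le _ _)
          (add_le_add (norm_add_le _ _) le_rfl)) le_rfl)
    _ ≤ d + (lamt - lam) / 4 * η + ((1 + lam - 2 * lamt) / 4 * η + lam * η) + δ :=
        add_le_add (add_le_add (add_le_add ((norm_snd_le _).trans hGFv)
          ((norm_snd_le _).trans hmvt')) hL) ((norm_snd_le _).trans hF0)
    _ ≤ η := by nlinarith [hη.le]
end
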